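/- arXiv:quant-ph/9907081 — 2 statements merged into one kernel-verified Lean document; each statement's English description precedes it below -/
import Mathlib

section
/- For every 0 ≤ μ ≤ 1, every positive semidefinite operator x on a finite-dimensional Hilbert space H, and every linear contraction a : H′ → H (‖a‖_op ≤ 1), one has a* x^μ a ≤ (a* x a)^μ. -/
open Matrix Filter
open scoped ComplexOrder Topology

set_option linter.unusedSectionVars false
set_option maxHeartbeats 1000000

namespace HansenAux

section A


variable {n : Type*} [Fintype n] [DecidableEq n] {A : Matrix n n ℂ}

lemma UU (hA : A.IsHermitian) :
    (hA.eigenvectorUnitary : Matrix n n ℂ) * (star hA.eigenvectorUnitary : Matrix n n ℂ) = 1 :=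
  Matrix.mem_unitaryGroup_iff.mp hA.eigenvectorUnitary.2

lemma UU' (hA : A.IsHermitian) :
    (star hA.eigenvectorUnitary : Matrix n n ℂ) * (hA.eigenvectorUnitary : Matrix n n ℂ) = 1 :=
  Matrix.mem_unitaryGroup_iff'.mp hA.eigenvectorUnitary.2

lemma starU (hA : A.IsHermitian) :
    (star hA.eigenvectorUnitary : Matrix n n ℂ) = (hA.eigenvectorUnitary : Matrix n n ℂ)ᴴ :=
  star_eq_conjTranspose _

lemma cfc_herm (hA : A.IsHermitian) (f : ℝ → ℝ) : (hA.cfc f).IsHermitian := by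
  unfold Matrix.IsHermitian.cfc
  simp only [Unitary.conjStarAlgAut_apply]
  rw [starU hA]
  apply isHermitian_mul_mul_conjTranspose
  apply isHermitian_diagonal_of_self_adjoint
  funext i
  simp [Function.comp, RCLike.star_def]

lemma cfc_mul (hA : A.IsHermitian) (f g : ℝ → ℝ) :
    hA.cfc f * hA.cfc g = hA.cfc (fun t => f t * g t) := by
  unfold Matrix.IsHermitian.cfc
  simp only [Unitary.conjStarAlgAut_apply]
  have h : ∀ B C : Matrix n n ℂ,
      ((hA.eigenvectorUnitary : Matrix n n ℂ) * B * (star hA.eigenvectorUnitary : Matrix n n ℂ)) *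
      ((hA.eigenvectorUnitary : Matrix n n ℂ) * C * (star hA.eigenvectorUnitary : Matrix n n ℂ))
      = (hA.eigenvectorUnitary : Matrix n n ℂ) * (B * C) *
        (star hA.eigenvectorUnitary : Matrix n n ℂ) := by
    intro B C
    calc ((hA.eigenvectorUnitary : Matrix n n ℂ) * B * (star hA.eigenvectorUnitary : Matrix n n ℂ)) *
      ((hA.eigenvectorUnitary : Matrix n n ℂ) * C * (star hA.eigenvectorUnitary : Matrix n n ℂ))
        = (hA.eigenvectorUnitary : Matrix n n ℂ) * B *
          (((star hA.eigenvectorUnitary : Matrix n n ℂ) * (hA.eigenvectorUnitary : Matrix n n ℂ)) *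
            C) * (star hA.eigenvectorUnitary : Matrix n n ℂ) := by
          simp only [Matrix.mul_assoc]
      _ = _ := by rw [UU' hA]; simp only [Matrix.one_mul, Matrix.mul_assoc]
  rw [h, diagonal_mul_diagonal]
  have : (fun i => (RCLike.ofReal ∘ f ∘ hA.eigenvalues) i * (RCLike.ofReal ∘ g ∘ hA.eigenvalues) i)
      = (RCLike.ofReal ∘ (fun t => f t * g t) ∘ hA.eigenvalues : n → ℂ) := by
    funext i; simp [Function.comp]
  rw [this]

lemma cfc_congr (hA : A.IsHermitian) {f g : ℝ → ℝ}
    (h : ∀ i, f (hA.eigenvalues i) = g (hA.eigenvalues i)) : hA.cfc f = hA.cfc g := by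
  unfold Matrix.IsHermitian.cfc
  have : (RCLike.ofReal ∘ f ∘ hA.eigenvalues : n → ℂ) = RCLike.ofReal ∘ g ∘ hA.eigenvalues := by
    funext i; simp [Function.comp, h i]
  rw [this]

lemma cfc_one (hA : A.IsHermitian) : hA.cfc (fun _ => 1) = 1 := by
  unfold Matrix.IsHermitian.cfc
  have : (RCLike.ofReal ∘ (fun _ : ℝ => (1:ℝ)) ∘ hA.eigenvalues : n → ℂ) = fun _ => 1 := by
    funext i; simp [Function.comp]
  simp only [Unitary.conjStarAlgAut_apply]
  rw [this, diagonal_one, Matrix.mul_one, UU hA]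

lemma cfc_id (hA : A.IsHermitian) : hA.cfc (fun t => t) = A := by
  unfold Matrix.IsHermitian.cfc
  exact (hA.spectral_theorem).symm

lemma cfc_sub (hA : A.IsHermitian) (f g : ℝ → ℝ) :
    hA.cfc f - hA.cfc g = hA.cfc (fun t => f t - g t) := by
  unfold Matrix.IsHermitian.cfc
  simp only [Unitary.conjStarAlgAut_apply]
  rw [← Matrix.sub_mul, ← Matrix.mul_sub, diagonal_sub]
  have : (fun i => (RCLike.ofReal ∘ f ∘ hA.eigenvalues : n → ℂ) i
        - (RCLike.ofReal ∘ g ∘ hA.eigenvalues : n → ℂ) i)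
      = (RCLike.ofReal ∘ (fun t => f t - g t) ∘ hA.eigenvalues : n → ℂ) := by
    funext i; simp [Function.comp]
  rw [this]

lemma cfc_psd (hA : A.IsHermitian) (f : ℝ → ℝ)
    (h : ∀ i, 0 ≤ f (hA.eigenvalues i)) : (hA.cfc f).PosSemidef := by
  unfold Matrix.IsHermitian.cfc
  simp only [Unitary.conjStarAlgAut_apply]
  rw [starU hA]
  apply Matrix.PosSemidef.mul_mul_conjTranspose_same
  rw [posSemidef_diagonal_iff]
  intro i
  simpa using Complex.zero_le_real.mpr (h i)

lemma cfc_qf (hA : A.IsHermitian) (f : ℝ → ℝ) (v : n → ℂ) :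
    star v ⬝ᵥ (hA.cfc f *ᵥ v) =
      ((∑ i, f (hA.eigenvalues i) *
        Complex.normSq (((star hA.eigenvectorUnitary : Matrix n n ℂ) *ᵥ v) i) : ℝ) : ℂ) := by
  unfold Matrix.IsHermitian.cfc
  simp only [Unitary.conjStarAlgAut_apply]
  set U : Matrix n n ℂ := (hA.eigenvectorUnitary : Matrix n n ℂ) with hU
  set w : n → ℂ := (star hA.eigenvectorUnitary : Matrix n n ℂ) *ᵥ v with hw
  have hUU : (star U)ᴴ = U := by rw [star_eq_conjTranspose, conjTranspose_conjTranspose]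
  have hsw : star v ᵥ* U = star w := by
    rw [hw, star_mulVec, hUU]
  show star v ⬝ᵥ ((U * diagonal (RCLike.ofReal ∘ f ∘ hA.eigenvalues) * star U) *ᵥ v) = _
  rw [← Matrix.mulVec_mulVec, ← Matrix.mulVec_mulVec, Matrix.dotProduct_mulVec, hsw]
  have hv : (star U) *ᵥ v = w := rfl
  rw [hv]
  simp only [dotProduct, Matrix.mulVec_diagonal, Complex.ofReal_sum]
  congr 1
  funext i
  push_cast
  simp only [Function.comp, Pi.star_apply, RCLike.star_def]
  rw [Complex.normSq_eq_conj_mul_self, mul_left_comm]; rfl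

lemma psd_exists_sq {C : Matrix n n ℂ} (hC : C.PosSemidef) : ∃ B : Matrix n n ℂ, C = Bᴴ * B := by
  refine ⟨hC.1.cfc Real.sqrt, ?_⟩
  rw [(cfc_herm hC.1 _).eq, cfc_mul]
  exact (cfc_id hC.1).symm.trans
    (cfc_congr hC.1 fun i => (Real.mul_self_sqrt (hC.eigenvalues_nonneg i)).symm)

end A

section B

variable {n m : Type*} [Fintype n] [DecidableEq n] [Fintype m] [DecidableEq m]

lemma herm_move {W : Matrix n n ℂ} (hW : W.IsHermitian) (v z : n → ℂ) :
    star v ⬝ᵥ (W *ᵥ z) = star (W *ᵥ v) ⬝ᵥ z := by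
  rw [Matrix.dotProduct_mulVec, star_mulVec, hW.eq]

lemma sqrt_mono {W N : Matrix n n ℂ} (hW : W.IsHermitian) (hN : N.PosSemidef)
    (h : (N * N - W * W).PosSemidef) : (N - W).PosSemidef := by
  have hH : (N - W).IsHermitian := hN.1.sub hW
  apply hH.posSemidef_iff_eigenvalues_nonneg.mpr
  intro i
  by_contra hneg
  push_neg at hneg
  set κ := hH.eigenvalues i with hκ
  set v : n → ℂ := ⇑(hH.eigenvectorBasis i) with hv
  have hvne : v ≠ 0 := by
    have := hH.eigenvectorBasis.orthonormal.ne_zero i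
    simpa [hv] using this
  have hev : (N - W) *ᵥ v = (κ : ℂ) • v := by
    have h1 := hH.mulVec_eigenvectorBasis i
    funext j
    have := congrFun h1 j
    simpa [Complex.real_smul] using this
  set p := N *ᵥ v with hp
  set u := W *ᵥ v with hu
  have hupv : u = p - (κ : ℂ) • v := by
    have h2 : p - u = (κ : ℂ) • v := by rw [hp, hu, ← Matrix.sub_mulVec]; exact hev
    rw [← h2]; abel
  set c := star v ⬝ᵥ p with hc
  set d := star v ⬝ᵥ v with hd
  have hc0 : 0 ≤ c := hN.dotProduct_mulVec_nonneg v
  have hd0 : 0 < d := Matrix.dotProduct_star_self_pos_iff.mpr hvne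
  have hcim : c.im = 0 := ((Complex.le_def.mp hc0).2).symm
  have hdim : d.im = 0 := by
    have := (Complex.lt_def.mp hd0).2; simpa using this.symm
  have hcre : 0 ≤ c.re := (Complex.le_def.mp hc0).1
  have hdre : 0 < d.re := by
    have := (Complex.lt_def.mp hd0).1; simpa using this
  have hpc : star p ⬝ᵥ v = c := by
    rw [Matrix.star_dotProduct]
    have : star c = c := by
      apply Complex.ext <;> simp [hcim]
    rw [hc, this]
  have keyN : star v ⬝ᵥ ((N * N) *ᵥ v) = star p ⬝ᵥ p := by
    rw [← Matrix.mulVec_mulVec, herm_move hN.1, hp]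
  have keyW : star v ⬝ᵥ ((W * W) *ᵥ v) = star u ⬝ᵥ u := by
    rw [← Matrix.mulVec_mulVec, herm_move hW, hu]
  have expand : star u ⬝ᵥ u = star p ⬝ᵥ p - 2*(κ:ℂ)*c + (κ:ℂ)^2*d := by
    rw [hupv]
    have hstar : star (p - (κ:ℂ) • v) = star p - (κ:ℂ) • star v := by
      rw [star_sub, star_smul]
      norm_num
    rw [hstar, sub_dotProduct, dotProduct_sub, dotProduct_sub,
      smul_dotProduct, smul_dotProduct, dotProduct_smul,
      dotProduct_smul, hpc]
    rw [← hc, ← hd]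
    simp only [smul_eq_mul]
    ring
  have h0 := h.dotProduct_mulVec_nonneg v
  rw [Matrix.sub_mulVec, dotProduct_sub, keyN, keyW, expand] at h0
  have h0' : 0 ≤ 2*(κ:ℂ)*c - (κ:ℂ)^2*d := by
    convert h0 using 1; ring
  have h0re : 0 ≤ 2*κ*c.re - κ^2*d.re := by
    have := (Complex.le_def.mp h0').1
    simpa [Complex.mul_re, Complex.ofReal_re, Complex.ofReal_im, hcim, hdim, pow_two] using this
  have hκ2 : 0 < κ^2 * d.re := by
    apply mul_pos _ hdre
    have : κ ≠ 0 := ne_of_lt hneg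
    positivity
  have h2 : 2*κ*c.re ≤ 0 :=
    mul_nonpos_of_nonpos_of_nonneg (by linarith [show κ < 0 from hneg]) hcre
  linarith

lemma psd_fromBlocks_diag {C : Matrix n n ℂ} {D : Matrix m m ℂ}
    (hC : C.PosSemidef) (hD : D.PosSemidef) : (fromBlocks C 0 0 D).PosSemidef := by
  obtain ⟨B₁, rfl⟩ := psd_exists_sq hC
  obtain ⟨B₂, rfl⟩ := psd_exists_sq hD
  have : (fromBlocks B₁ 0 0 B₂ : Matrix (n ⊕ m) (n ⊕ m) ℂ)ᴴ * fromBlocks B₁ 0 0 B₂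
      = fromBlocks (B₁ᴴ * B₁) 0 0 (B₂ᴴ * B₂) := by
    rw [fromBlocks_conjTranspose, fromBlocks_multiply]
    simp
  rw [← this]
  exact posSemidef_conjTranspose_mul_self _

lemma psd_block₁₁ {C : Matrix n n ℂ} {Z₁ : Matrix n m ℂ} {Z₂ : Matrix m n ℂ}
    {D : Matrix m m ℂ} (h : (fromBlocks C Z₁ Z₂ D).PosSemidef) : C.PosSemidef := by
  have := h.submatrix (Sum.inl : n → n ⊕ m)
  have he : (fromBlocks C Z₁ Z₂ D).submatrix (Sum.inl : n → n ⊕ m) Sum.inl = C := by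
    ext i j; simp [Matrix.submatrix_apply]
  rwa [he] at this

lemma schur_step {A A' B Z : Matrix n n ℂ}
    (h : (fromBlocks A Z Z B).PosSemidef) (hinv : A * A' = 1) :
    (B - Z * A' * Z).PosSemidef := by
  have key := h.conjTranspose_mul_mul_same (fromBlocks (-(A' * Z)) 0 1 0 : Matrix (n ⊕ n) (n ⊕ n) ℂ)
  have hcomp : (fromBlocks (-(A' * Z)) 0 1 0 : Matrix (n ⊕ n) (n ⊕ n) ℂ)ᴴ *
      (fromBlocks A Z Z B) * (fromBlocks (-(A' * Z)) 0 1 0) =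
      fromBlocks (B - Z * A' * Z) 0 0 0 := by
    have e1 : A * -(A' * Z) + Z * 1 = 0 := by
      rw [Matrix.mul_neg, ← Matrix.mul_assoc, hinv, Matrix.one_mul, Matrix.mul_one]
      abel
    have e2 : Z * -(A' * Z) + B * 1 = B - Z * A' * Z := by
      rw [Matrix.mul_neg, ← Matrix.mul_assoc, Matrix.mul_one]
      abel
    have hPS : (fromBlocks A Z Z B) * (fromBlocks (-(A' * Z)) 0 1 0 : Matrix (n ⊕ n) (n ⊕ n) ℂ)
        = fromBlocks 0 0 (B - Z * A' * Z) 0 := by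
      rw [fromBlocks_multiply, e1, e2]
      congr 1 <;> simp
    rw [Matrix.mul_assoc, hPS, fromBlocks_conjTranspose, fromBlocks_multiply]
    simp
  rw [hcomp] at key
  exact psd_block₁₁ key

end B

section C

variable {n : Type*} [Fintype n] [DecidableEq n] {A : Matrix n n ℂ}

variable {n' : Type*} [Fintype n'] [DecidableEq n']

lemma qf_expand {x : Matrix n n ℂ} (hx : x.IsHermitian) (a : Matrix n n' ℂ)
    (hy : (aᴴ * x * a).IsHermitian) (f g : ℝ → ℝ) (v : n' → ℂ) :
    star v ⬝ᵥ ((hy.cfc f - aᴴ * hx.cfc g * a) *ᵥ v) =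
      ((∑ i, f (hy.eigenvalues i) *
          Complex.normSq (((star hy.eigenvectorUnitary : Matrix n' n' ℂ) *ᵥ v) i)
        - ∑ j, g (hx.eigenvalues j) *
          Complex.normSq (((star hx.eigenvectorUnitary : Matrix n n ℂ) *ᵥ (a *ᵥ v)) j) : ℝ) : ℂ) := by
  rw [Matrix.sub_mulVec, dotProduct_sub]
  have h2 : star v ⬝ᵥ ((aᴴ * hx.cfc g * a) *ᵥ v) =
      star (a *ᵥ v) ⬝ᵥ (hx.cfc g *ᵥ (a *ᵥ v)) := by
    rw [← Matrix.mulVec_mulVec, ← Matrix.mulVec_mulVec, Matrix.dotProduct_mulVec, ← star_mulVec]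
  rw [h2, cfc_qf, cfc_qf]
  push_cast
  ring


-- steps 4-8 for a fixed ε, with abstract PSD y and hermitian Z
lemma eps_step {y : Matrix n n ℂ} (hy : y.PosSemidef) {Z : Matrix n n ℂ}
    (hZh : Z.IsHermitian) {μ ν : ℝ} (hμ : 0 ≤ μ) (hν : 0 ≤ ν)
    (h : (fromBlocks (hy.1.cfc (fun t => t ^ μ)) Z Z (hy.1.cfc (fun t => t ^ ν))).PosSemidef)
    {ε : ℝ} (hε : 0 < ε) :
    (hy.1.cfc (fun t => (t + ε) ^ ((μ + ν)/2)) - Z).PosSemidef := by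
  set θ := (μ + ν)/2 with hθdef
  have hyev : ∀ i, 0 ≤ hy.1.eigenvalues i := hy.eigenvalues_nonneg
  have hpos : ∀ i, 0 < hy.1.eigenvalues i + ε := fun i => by linarith [hyev i]
  have keyY : ∀ α β : ℝ,
      hy.1.cfc (fun t => (t + ε) ^ α) * hy.1.cfc (fun t => (t + ε) ^ β)
        = hy.1.cfc (fun t => (t + ε) ^ (α + β)) := by
    intro α β
    rw [cfc_mul]
    exact cfc_congr hy.1 fun i => (Real.rpow_add (hpos i) α β).symm
  have keyY1 : ∀ α β : ℝ, α + β = 0 →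
      hy.1.cfc (fun t => (t + ε) ^ α) * hy.1.cfc (fun t => (t + ε) ^ β) = 1 := by
    intro α β hab
    rw [keyY, hab, ← cfc_one hy.1]
    exact cfc_congr hy.1 fun i => Real.rpow_zero _
  have corner : ∀ α : ℝ, 0 ≤ α →
      (hy.1.cfc (fun t => (t + ε) ^ α) - hy.1.cfc (fun t => t ^ α)).PosSemidef := by
    intro α hα
    rw [cfc_sub]
    apply cfc_psd
    intro i
    have : hy.1.eigenvalues i ^ α ≤ (hy.1.eigenvalues i + ε) ^ α :=
      Real.rpow_le_rpow (hyev i) (by linarith) hα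
    linarith
  have step4 : (fromBlocks (hy.1.cfc (fun t => (t + ε) ^ μ)) Z
      Z (hy.1.cfc (fun t => (t + ε) ^ ν))).PosSemidef := by
    have h4 := h.add (psd_fromBlocks_diag (corner μ hμ) (corner ν hν))
    have cancel : ∀ P Q : Matrix n n ℂ, P + (Q - P) = Q := fun P Q => by abel
    have hsum : fromBlocks (hy.1.cfc (fun t => t ^ μ)) Z Z (hy.1.cfc (fun t => t ^ ν)) +
        fromBlocks (hy.1.cfc (fun t => (t + ε) ^ μ) - hy.1.cfc (fun t => t ^ μ)) 0 0
          (hy.1.cfc (fun t => (t + ε) ^ ν) - hy.1.cfc (fun t => t ^ ν))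
        = fromBlocks (hy.1.cfc (fun t => (t + ε) ^ μ)) Z Z (hy.1.cfc (fun t => (t + ε) ^ ν)) := by
      simp only [fromBlocks_add, cancel, add_zero]
    rwa [hsum] at h4
  have step5 : (hy.1.cfc (fun t => (t + ε) ^ ν)
      - Z * hy.1.cfc (fun t => (t + ε) ^ (-μ)) * Z).PosSemidef :=
    schur_step step4 (keyY1 μ (-μ) (by ring))
  set R := hy.1.cfc (fun t => (t + ε) ^ (-(μ/2))) with hRdef
  have hRh : R.IsHermitian := cfc_herm hy.1 _
  set W := R * Z * R with hWdef
  have hWh : W.IsHermitian := by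
    have h' := isHermitian_mul_mul_conjTranspose R hZh
    rwa [hRh.eq] at h'
  set N := hy.1.cfc (fun t => (t + ε) ^ ((ν - μ)/2)) with hNdef
  have hNpsd : N.PosSemidef := cfc_psd hy.1 _ fun i => Real.rpow_nonneg (hpos i).le _
  have hNN : N * N = hy.1.cfc (fun t => (t + ε) ^ (ν - μ)) := by
    rw [hNdef, keyY, show (ν - μ)/2 + (ν - μ)/2 = ν - μ by ring]
  have step6 : (N * N - W * W).PosSemidef := by
    have h1 := step5.mul_mul_conjTranspose_same R
    rw [hRh.eq] at h1
    have heq : R * (hy.1.cfc (fun t => (t + ε) ^ ν)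
        - Z * hy.1.cfc (fun t => (t + ε) ^ (-μ)) * Z) * R = N * N - W * W := by
      have eqA : R * hy.1.cfc (fun t => (t + ε) ^ ν) * R
          = hy.1.cfc (fun t => (t + ε) ^ (ν - μ)) := by
        rw [hRdef, keyY, show -(μ/2) + ν = ν - μ/2 by ring, keyY,
          show ν - μ/2 + -(μ/2) = ν - μ by ring]
      have hRR : R * R = hy.1.cfc (fun t => (t + ε) ^ (-μ)) := by
        rw [hRdef, keyY, show -(μ/2) + -(μ/2) = -μ by ring]
      have eqB : R * (Z * hy.1.cfc (fun t => (t + ε) ^ (-μ)) * Z) * R = W * W := by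
        rw [← hRR, hWdef]
        simp only [Matrix.mul_assoc]
      rw [Matrix.mul_sub, Matrix.sub_mul, hNN, eqA, eqB]
    rwa [heq] at h1
  have step7 : (N - W).PosSemidef := sqrt_mono hWh hNpsd step6
  set R' := hy.1.cfc (fun t => (t + ε) ^ (μ/2)) with hR'def
  have hR'h : R'.IsHermitian := cfc_herm hy.1 _
  have h8 := step7.mul_mul_conjTranspose_same R'
  rw [hR'h.eq] at h8
  have heq8 : R' * (N - W) * R' = hy.1.cfc (fun t => (t + ε) ^ θ) - Z := by
    have eqC : R' * N * R' = hy.1.cfc (fun t => (t + ε) ^ θ) := by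
      rw [hR'def, hNdef, keyY, show μ/2 + (ν - μ)/2 = θ - μ/2 by rw [hθdef]; ring, keyY,
        show θ - μ/2 + μ/2 = θ by ring]
    have hR'R : R' * R = 1 := keyY1 _ _ (by ring)
    have hRR' : R * R' = 1 := keyY1 _ _ (by ring)
    have eqD : R' * W * R' = Z := by
      have hw : R' * W * R' = (R' * R) * Z * (R * R') := by
        rw [hWdef]; simp only [Matrix.mul_assoc]
      rw [hw, hR'R, hRR', Matrix.one_mul, Matrix.mul_one]
    rw [Matrix.mul_sub, Matrix.sub_mul, eqC, eqD]
  rwa [heq8] at h8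

lemma midpoint_step (x : Matrix n n ℂ) (hx : x.PosSemidef) (a : Matrix n n' ℂ)
    (hy : (aᴴ * x * a).PosSemidef) {μ ν : ℝ} (hμ : 0 ≤ μ) (hν : 0 ≤ ν)
    (Hμ : (hy.1.cfc (fun t => t ^ μ) - aᴴ * hx.1.cfc (fun t => t ^ μ) * a).PosSemidef)
    (Hν : (hy.1.cfc (fun t => t ^ ν) - aᴴ * hx.1.cfc (fun t => t ^ ν) * a).PosSemidef) :
    (hy.1.cfc (fun t => t ^ ((μ + ν)/2))
      - aᴴ * hx.1.cfc (fun t => t ^ ((μ + ν)/2)) * a).PosSemidef := by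
  set θ := (μ + ν)/2 with hθdef
  have hθ0 : 0 ≤ θ := by positivity
  have hxev : ∀ i, 0 ≤ hx.1.eigenvalues i := hx.eigenvalues_nonneg
  have hyev : ∀ i, 0 ≤ hy.1.eigenvalues i := hy.eigenvalues_nonneg
  set Z := aᴴ * hx.1.cfc (fun t => t ^ θ) * a with hZdef
  have hZh : Z.IsHermitian := isHermitian_conjTranspose_mul_mul a (cfc_herm hx.1 _)
  have keyX : ∀ α β : ℝ, 0 ≤ α → 0 ≤ β →
      hx.1.cfc (fun t => t ^ α) * hx.1.cfc (fun t => t ^ β) = hx.1.cfc (fun t => t ^ (α + β)) := by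
    intro α β hα hβ
    rw [cfc_mul]
    exact cfc_congr hx.1 fun i => (Real.rpow_add_of_nonneg (hxev i) hα hβ).symm
  -- step 1 : block matrix of powers of x is PSD
  have step1 : (fromBlocks (hx.1.cfc (fun t => t ^ μ)) (hx.1.cfc (fun t => t ^ θ))
      (hx.1.cfc (fun t => t ^ θ)) (hx.1.cfc (fun t => t ^ ν))).PosSemidef := by
    set M₁ := hx.1.cfc (fun t => t ^ (μ/2)) with hM₁
    set M₂ := hx.1.cfc (fun t => t ^ (ν/2)) with hM₂
    have e11 : M₁ * M₁ = hx.1.cfc (fun t => t ^ μ) := by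
      rw [hM₁, keyX _ _ (by positivity) (by positivity), show μ/2 + μ/2 = μ by ring]
    have e12 : M₁ * M₂ = hx.1.cfc (fun t => t ^ θ) := by
      rw [hM₁, hM₂, keyX _ _ (by positivity) (by positivity), show μ/2 + ν/2 = θ by rw [hθdef]; ring]
    have e21 : M₂ * M₁ = hx.1.cfc (fun t => t ^ θ) := by
      rw [hM₁, hM₂, keyX _ _ (by positivity) (by positivity), show ν/2 + μ/2 = θ by rw [hθdef]; ring]
    have e22 : M₂ * M₂ = hx.1.cfc (fun t => t ^ ν) := by
      rw [hM₂, keyX _ _ (by positivity) (by positivity), show ν/2 + ν/2 = ν by ring]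
    have hCC : (fromBlocks M₁ M₂ 0 0 : Matrix (n ⊕ n) (n ⊕ n) ℂ)ᴴ * fromBlocks M₁ M₂ 0 0
        = fromBlocks (hx.1.cfc (fun t => t ^ μ)) (hx.1.cfc (fun t => t ^ θ))
            (hx.1.cfc (fun t => t ^ θ)) (hx.1.cfc (fun t => t ^ ν)) := by
      rw [fromBlocks_conjTranspose, fromBlocks_multiply]
      rw [(cfc_herm hx.1 _).eq, (cfc_herm hx.1 _).eq]
      simp only [Matrix.conjTranspose_zero, Matrix.zero_mul, Matrix.mul_zero, add_zero, zero_add]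
      rw [e11, e12, e21, e22]
    rw [← hCC]
    exact posSemidef_conjTranspose_mul_self _
  -- step 2+3 : conjugate by diag(a,a) and improve corners
  have step3 : (fromBlocks (hy.1.cfc (fun t => t ^ μ)) Z Z (hy.1.cfc (fun t => t ^ ν))).PosSemidef := by
    have h2 := step1.conjTranspose_mul_mul_same (fromBlocks a 0 0 a : Matrix (n ⊕ n) (n' ⊕ n') ℂ)
    have hconj : (fromBlocks a 0 0 a : Matrix (n ⊕ n) (n' ⊕ n') ℂ)ᴴ *
        (fromBlocks (hx.1.cfc (fun t => t ^ μ)) (hx.1.cfc (fun t => t ^ θ))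
          (hx.1.cfc (fun t => t ^ θ)) (hx.1.cfc (fun t => t ^ ν))) *
        (fromBlocks a 0 0 a : Matrix (n ⊕ n) (n' ⊕ n') ℂ)
        = fromBlocks (aᴴ * hx.1.cfc (fun t => t ^ μ) * a) Z
            Z (aᴴ * hx.1.cfc (fun t => t ^ ν) * a) := by
      rw [fromBlocks_conjTranspose, fromBlocks_multiply, fromBlocks_multiply]
      simp only [Matrix.conjTranspose_zero, Matrix.zero_mul, Matrix.mul_zero, add_zero, zero_add,
        hZdef]
    rw [hconj] at h2
    have h3 := h2.add (psd_fromBlocks_diag Hμ Hν)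
    have hsum : fromBlocks (aᴴ * hx.1.cfc (fun t => t ^ μ) * a) Z
          Z (aᴴ * hx.1.cfc (fun t => t ^ ν) * a) +
        fromBlocks (hy.1.cfc (fun t => t ^ μ) - aᴴ * hx.1.cfc (fun t => t ^ μ) * a) 0 0
          (hy.1.cfc (fun t => t ^ ν) - aᴴ * hx.1.cfc (fun t => t ^ ν) * a)
        = fromBlocks (hy.1.cfc (fun t => t ^ μ)) Z Z (hy.1.cfc (fun t => t ^ ν)) := by
      have cancel : ∀ P Q : Matrix n' n' ℂ, P + (Q - P) = Q := fun P Q => by abel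
      simp only [fromBlocks_add, cancel, add_zero]
    rwa [hsum] at h3
  have forall_eps : ∀ ε : ℝ, 0 < ε →
      (hy.1.cfc (fun t => (t + ε) ^ θ) - Z).PosSemidef := fun ε hε =>
    eps_step hy hZh hμ hν step3 hε
  -- pass to the limit ε → 0⁺
  refine posSemidef_iff_dotProduct_mulVec.mpr ⟨?_, ?_⟩
  · exact (cfc_herm hy.1 _).sub hZh
  · intro v
    rw [hZdef, qf_expand hx.1 a hy.1 _ _ v, Complex.zero_le_real, sub_nonneg]
    set r : n' → ℝ := fun i =>
      Complex.normSq (((star hy.1.eigenvectorUnitary : Matrix n' n' ℂ) *ᵥ v) i) with hrdef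
    set S2 : ℝ := ∑ j, (hx.1.eigenvalues j) ^ θ *
      Complex.normSq (((star hx.1.eigenvectorUnitary : Matrix n n ℂ) *ᵥ (a *ᵥ v)) j) with hS2def
    have hle : ∀ ε : ℝ, 0 < ε → S2 ≤ ∑ i, (hy.1.eigenvalues i + ε) ^ θ * r i := by
      intro ε hε
      have h := (forall_eps ε hε).dotProduct_mulVec_nonneg v
      rw [hZdef, qf_expand hx.1 a hy.1 _ _ v, Complex.zero_le_real, sub_nonneg] at h
      exact h
    have htend : Filter.Tendsto (fun ε : ℝ => ∑ i, (hy.1.eigenvalues i + ε) ^ θ * r i)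
        (nhdsWithin 0 (Set.Ioi 0)) (nhds (∑ i, (hy.1.eigenvalues i) ^ θ * r i)) := by
      have : ∀ i : n', Filter.Tendsto (fun ε : ℝ => (hy.1.eigenvalues i + ε) ^ θ * r i)
          (nhdsWithin 0 (Set.Ioi 0)) (nhds ((hy.1.eigenvalues i) ^ θ * r i)) := by
        intro i
        have hc : ContinuousAt (fun ε : ℝ => (hy.1.eigenvalues i + ε) ^ θ * r i) 0 := by
          apply ContinuousAt.mul _ continuousAt_const
          have h1 : ContinuousAt (fun s : ℝ => s ^ θ) (hy.1.eigenvalues i + 0) := by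
            apply Real.continuousAt_rpow_const _ _ (Or.inr hθ0)
          exact h1.comp ((continuous_const.add continuous_id).continuousAt)
        have := hc.tendsto
        rw [add_zero] at this
        exact this.mono_left nhdsWithin_le_nhds
      exact tendsto_finset_sum _ fun i _ => this i
    exact ge_of_tendsto htend (eventually_nhdsWithin_of_forall fun ε hε => hle ε hε)

end C

section E

variable {n : Type*} [Fintype n] [DecidableEq n] {A : Matrix n n ℂ}

variable {n' : Type*} [Fintype n'] [DecidableEq n']

lemma cfc_rpow_zero (hA : A.IsHermitian) : hA.cfc (fun t => t ^ (0:ℝ)) = 1 := by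
  rw [← cfc_one hA]
  exact cfc_congr hA fun i => Real.rpow_zero _

lemma cfc_rpow_one (hA : A.IsHermitian) : hA.cfc (fun t => t ^ (1:ℝ)) = A := by
  exact (cfc_congr hA fun i => Real.rpow_one _).trans (cfc_id hA)

lemma base0 (x : Matrix n n ℂ) (hx : x.PosSemidef) (a : Matrix n n' ℂ)
    (ha : ((1 : Matrix n' n' ℂ) - aᴴ * a).PosSemidef) (hy : (aᴴ * x * a).PosSemidef) :
    (hy.1.cfc (fun t => t ^ (0:ℝ)) - aᴴ * hx.1.cfc (fun t => t ^ (0:ℝ)) * a).PosSemidef := by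
  rw [cfc_rpow_zero, cfc_rpow_zero, Matrix.mul_one]
  exact ha

lemma base1 (x : Matrix n n ℂ) (hx : x.PosSemidef) (a : Matrix n n' ℂ)
    (hy : (aᴴ * x * a).PosSemidef) :
    (hy.1.cfc (fun t => t ^ (1:ℝ)) - aᴴ * hx.1.cfc (fun t => t ^ (1:ℝ)) * a).PosSemidef := by
  rw [cfc_rpow_one, cfc_rpow_one, sub_self]
  exact Matrix.PosSemidef.zero

lemma dyadic (x : Matrix n n ℂ) (hx : x.PosSemidef) (a : Matrix n n' ℂ)
    (ha : ((1 : Matrix n' n' ℂ) - aᴴ * a).PosSemidef) (hy : (aᴴ * x * a).PosSemidef) :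
    ∀ k m : ℕ, m ≤ 2^k →
      (hy.1.cfc (fun t => t ^ ((m : ℝ)/2^k))
        - aᴴ * hx.1.cfc (fun t => t ^ ((m : ℝ)/2^k)) * a).PosSemidef := by
  intro k
  induction k with
  | zero =>
    intro m hm
    interval_cases m
    · rw [show ((0:ℕ) : ℝ)/2^(0:ℕ) = (0:ℝ) by norm_num]
      exact base0 x hx a ha hy
    · rw [show ((1:ℕ) : ℝ)/2^(0:ℕ) = (1:ℝ) by norm_num]
      exact base1 x hx a hy
  | succ k ih =>
    intro m hm
    rcases Nat.even_or_odd m with ⟨l, hl⟩ | ⟨l, hl⟩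
    · have hl2 : l ≤ 2^k := by subst hl; rw [pow_succ] at hm; omega
      have : ((m : ℝ))/2^(k+1) = (l : ℝ)/2^k := by
        subst hl; push_cast; rw [pow_succ]; field_simp; ring
      rw [this]
      exact ih l hl2
    · have hl1 : l ≤ 2^k := by subst hl; rw [pow_succ] at hm; omega
      have hl2 : l + 1 ≤ 2^k := by subst hl; rw [pow_succ] at hm; omega
      have key := midpoint_step x hx a hy
        (by positivity : (0:ℝ) ≤ (l : ℝ)/2^k)
        (by positivity : (0:ℝ) ≤ ((l+1 : ℕ) : ℝ)/2^k)
        (ih l hl1) (ih (l+1) hl2)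
      have : ((m : ℝ))/2^(k+1) = ((l : ℝ)/2^k + ((l+1 : ℕ) : ℝ)/2^k)/2 := by
        subst hl; push_cast; rw [pow_succ]; field_simp; ring
      rw [this]
      exact key

lemma tendsto_rpow_seq {t : ℝ} (ht : 0 ≤ t) {μ : ℝ} (hμ : 0 < μ) {q : ℕ → ℝ}
    (hq : Tendsto q atTop (𝓝 μ)) (hqpos : ∀ k, μ ≤ q k) :
    Tendsto (fun k => t ^ (q k)) atTop (𝓝 (t ^ μ)) := by
  rcases eq_or_lt_of_le ht with h0 | hpos
  · have h1 : ∀ k, t ^ (q k) = 0 := fun k => by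
      rw [← h0]; exact Real.zero_rpow (by linarith [hqpos k])
    have h2 : t ^ μ = 0 := by rw [← h0]; exact Real.zero_rpow (ne_of_gt hμ)
    rw [h2]
    exact tendsto_const_nhds.congr fun k => (h1 k).symm
  · have h1 : ∀ p : ℝ, t ^ p = Real.exp (Real.log t * p) := fun p =>
      Real.rpow_def_of_pos hpos p
    have h2 : Tendsto (fun k => Real.log t * q k) atTop (𝓝 (Real.log t * μ)) :=
      hq.const_mul _
    have h3 := (Real.continuous_exp.tendsto _).comp h2
    rw [show (fun k => t ^ (q k)) = fun k => Real.exp (Real.log t * q k) from funext fun k => h1 _,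
      h1]
    exact h3

lemma main_aux (x : Matrix n n ℂ) (hx : x.PosSemidef) (a : Matrix n n' ℂ)
    (ha : ((1 : Matrix n' n' ℂ) - aᴴ * a).PosSemidef) (hy : (aᴴ * x * a).PosSemidef)
    (μ : ℝ) (hμ0 : 0 ≤ μ) (hμ1 : μ ≤ 1) :
    (hy.1.cfc (fun t => t ^ μ) - aᴴ * hx.1.cfc (fun t => t ^ μ) * a).PosSemidef := by
  rcases eq_or_lt_of_le hμ0 with h0 | hpos
  · rw [← h0]; exact base0 x hx a ha hy
  set q : ℕ → ℝ := fun k => (⌈μ * 2^k⌉₊ : ℝ)/2^k with hqdef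
  have hq2 : ∀ k : ℕ, (0:ℝ) < 2^k := fun k => by positivity
  have hdy : ∀ k, (hy.1.cfc (fun t => t ^ (q k))
      - aᴴ * hx.1.cfc (fun t => t ^ (q k)) * a).PosSemidef := by
    intro k
    apply dyadic x hx a ha hy k
    rw [Nat.ceil_le]
    push_cast
    nlinarith [hq2 k]
  have hge : ∀ k, μ ≤ q k := by
    intro k
    rw [hqdef, le_div_iff₀ (hq2 k)]
    exact Nat.le_ceil _
  have hle : ∀ k, q k ≤ μ + 1/2^k := by
    intro k
    rw [hqdef, div_le_iff₀ (hq2 k)]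
    have := Nat.ceil_lt_add_one (by positivity : (0:ℝ) ≤ μ * 2^k)
    have h2 : (μ + 1/2^k) * 2^k = μ * 2^k + 1 := by field_simp
    rw [h2]
    linarith
  have htend : Tendsto q atTop (𝓝 μ) := by
    have hub : Tendsto (fun k : ℕ => μ + 1/2^k) atTop (𝓝 (μ + 0)) := by
      apply tendsto_const_nhds.add
      have : Tendsto (fun k : ℕ => ((1:ℝ)/2)^k) atTop (𝓝 0) := by
        apply tendsto_pow_atTop_nhds_zero_of_lt_one <;> norm_num
      exact this.congr fun k => by rw [one_div, inv_pow, ← one_div]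
    rw [add_zero] at hub
    exact tendsto_of_tendsto_of_tendsto_of_le_of_le tendsto_const_nhds hub hge hle
  refine posSemidef_iff_dotProduct_mulVec.mpr ⟨?_, ?_⟩
  · exact (cfc_herm hy.1 _).sub (isHermitian_conjTranspose_mul_mul a (cfc_herm hx.1 _))
  · intro v
    rw [qf_expand hx.1 a hy.1 _ _ v, Complex.zero_le_real, sub_nonneg]
    set r : n' → ℝ := fun i =>
      Complex.normSq (((star hy.1.eigenvectorUnitary : Matrix n' n' ℂ) *ᵥ v) i) with hrdef
    set s : n → ℝ := fun j =>
      Complex.normSq (((star hx.1.eigenvectorUnitary : Matrix n n ℂ) *ᵥ (a *ᵥ v)) j) with hsdef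
    have hk : ∀ k, ∑ j, (hx.1.eigenvalues j) ^ (q k) * s j
        ≤ ∑ i, (hy.1.eigenvalues i) ^ (q k) * r i := by
      intro k
      have h := (hdy k).dotProduct_mulVec_nonneg v
      rwa [qf_expand hx.1 a hy.1 _ _ v, Complex.zero_le_real, sub_nonneg] at h
    have ht1 : Tendsto (fun k => ∑ i, (hy.1.eigenvalues i) ^ (q k) * r i) atTop
        (𝓝 (∑ i, (hy.1.eigenvalues i) ^ μ * r i)) := by
      apply tendsto_finset_sum
      intro i _
      exact (tendsto_rpow_seq (hy.eigenvalues_nonneg i) hpos htend hge).mul_const _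
    have ht2 : Tendsto (fun k => ∑ j, (hx.1.eigenvalues j) ^ (q k) * s j) atTop
        (𝓝 (∑ j, (hx.1.eigenvalues j) ^ μ * s j)) := by
      apply tendsto_finset_sum
      intro j _
      exact (tendsto_rpow_seq (hx.eigenvalues_nonneg j) hpos htend hge).mul_const _
    exact le_of_tendsto_of_tendsto' ht2 ht1 hk

end E

end HansenAux

/-- For `0 ≤ μ ≤ 1`, every positive semidefinite operator `x` on `H` and every linear
contraction `a : H' → H` (i.e. `a*a ≤ 1`, equivalently `‖a‖_op ≤ 1`), one has
`a* x^μ a ≤ (a* x a)^μ` in the Loewner order on operators on `H'`. -/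
theorem conj_rpow_le_rpow_conj {n n' : Type*} [Fintype n] [DecidableEq n]
    [Fintype n'] [DecidableEq n'] (μ : ℝ) (hμ0 : 0 ≤ μ) (hμ1 : μ ≤ 1)
    (x : Matrix n n ℂ) (hx : x.PosSemidef) (a : Matrix n n' ℂ)
    (ha : ((1 : Matrix n' n' ℂ) - aᴴ * a).PosSemidef)
    (hxa : (aᴴ * x * a).IsHermitian) :
    (hxa.cfc (fun t : ℝ => t ^ μ) - aᴴ * (hx.1.cfc (fun t : ℝ => t ^ μ)) * a).PosSemidef := by
  have hy : (aᴴ * x * a).PosSemidef := hx.conjTranspose_mul_mul_same a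
  exact HansenAux.main_aux x hx a ha hy μ hμ0 hμ1
end

section
/- In the proof of Uhlmann's lemma, the linear map V defined on the Hilbert space A₁ (with inner product <a,b> = tr(a*b)) by V(a T₁^{1/2}) = β(a) T₂^{1/2} is a contraction: ‖β(a) T₂^{1/2}‖ ≤ ‖a T₁^{1/2}‖ for all a ∈ A₁, where β is a unital Schwarz map, T₁ ∈ A₁⁺ invertible, T₂ ∈ A₂⁺, and tr(T₂ β(a)) ≤ tr(T₁ a) for all a ∈ A₁⁺. -/
/-!
Writing `S = T^{1/2}`, the squared Hilbert–Schmidt norm of `M S` is `tr(S M* M S) = tr(T M* M)`.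
Since `T₂ ≥ 0`, the Schwarz inequality `β(a)* β(a) ≤ β(a* a)` gives
`tr(T₂ β(a)* β(a)) ≤ tr(T₂ β(a* a))`, and the trace hypothesis applied to `a* a ≥ 0` bounds this
by `tr(T₁ a* a)`.
-/

open Matrix
open scoped ComplexOrder

namespace Matrix

open scoped MatrixOrder

variable {ι 𝕜 : Type*} [Fintype ι] [DecidableEq ι] [RCLike 𝕜]

lemma PosSemidef.cfc_sqrt_eq_sqrt {A : Matrix ι ι 𝕜} (hA : A.PosSemidef) :
    hA.1.cfc Real.sqrt = CFC.sqrt A := by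
  rw [CFC.sqrt_eq_real_sqrt A hA.nonneg, cfcₙ_eq_cfc, hA.1.cfc_eq]

lemma PosSemidef.trace_mul_nonneg {A B : Matrix ι ι 𝕜} (hA : A.PosSemidef)
    (hB : B.PosSemidef) : 0 ≤ (A * B).trace := by
  rw [← CFC.sqrt_mul_sqrt_self A hA.nonneg, mul_assoc, trace_mul_comm]
  exact ((CFC.sqrt_nonneg A).isSelfAdjoint.conjugate_nonneg hB.nonneg).posSemidef.trace_nonneg

lemma PosSemidef.trace_mul_le_trace_mul {T A B : Matrix ι ι 𝕜} (hT : T.PosSemidef)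
    (hAB : (B - A).PosSemidef) : (T * A).trace ≤ (T * B).trace := by
  simpa only [mul_sub, trace_sub, sub_nonneg] using hT.trace_mul_nonneg hAB

lemma trace_star_mul_sqrt_mul_self {T : Matrix ι ι 𝕜} (hT : T.PosSemidef) (M : Matrix ι ι 𝕜) :
    (star (M * CFC.sqrt T) * (M * CFC.sqrt T)).trace = (T * (star M * M)).trace := by
  rw [star_mul, (CFC.sqrt_nonneg T).isSelfAdjoint.star_eq, mul_assoc, trace_mul_comm,
    ← mul_assoc, ← mul_assoc, mul_assoc (star M * M), CFC.sqrt_mul_sqrt_self T hT.nonneg,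
    trace_mul_comm, mul_assoc]

end Matrix
theorem uhlmann_contraction_general {n m : ℕ}
    (A₁ : StarSubalgebra ℂ (Matrix (Fin n) (Fin n) ℂ))
    (A₂ : StarSubalgebra ℂ (Matrix (Fin m) (Fin m) ℂ))
    (β : A₁ →ₗ[ℂ] A₂)
    (hβS : ∀ x : A₁, ((↑(β (star x * x)) : Matrix (Fin m) (Fin m) ℂ) -
      star (↑(β x) : Matrix (Fin m) (Fin m) ℂ) *
        (↑(β x) : Matrix (Fin m) (Fin m) ℂ)).PosSemidef)
    (T₁ : A₁) (T₂ : A₂)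
    (hT₁ : (↑T₁ : Matrix (Fin n) (Fin n) ℂ).PosDef)
    (hT₂ : (↑T₂ : Matrix (Fin m) (Fin m) ℂ).PosSemidef)
    (hT : ∀ a : A₁, (↑a : Matrix (Fin n) (Fin n) ℂ).PosSemidef →
      ((↑T₂ : Matrix (Fin m) (Fin m) ℂ) * (↑(β a) : Matrix (Fin m) (Fin m) ℂ)).trace ≤
        ((↑T₁ : Matrix (Fin n) (Fin n) ℂ) * (↑a : Matrix (Fin n) (Fin n) ℂ)).trace) :
    ∀ a : A₁,
      Real.sqrt ((star ((↑(β a) : Matrix (Fin m) (Fin m) ℂ) * hT₂.1.cfc Real.sqrt) *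
        ((↑(β a) : Matrix (Fin m) (Fin m) ℂ) * hT₂.1.cfc Real.sqrt)).trace.re) ≤
      Real.sqrt ((star ((↑a : Matrix (Fin n) (Fin n) ℂ) * hT₁.posSemidef.1.cfc Real.sqrt) *
        ((↑a : Matrix (Fin n) (Fin n) ℂ) * hT₁.posSemidef.1.cfc Real.sqrt)).trace.re) := by
  intro a
  rw [hT₂.cfc_sqrt_eq_sqrt, hT₁.posSemidef.cfc_sqrt_eq_sqrt, trace_star_mul_sqrt_mul_self hT₂,
    trace_star_mul_sqrt_mul_self hT₁.posSemidef]
  refine Real.sqrt_le_sqrt (Complex.re_le_re ?_)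
  calc ((T₂ : Matrix (Fin m) (Fin m) ℂ) * (star (β a : Matrix (Fin m) (Fin m) ℂ) * β a)).trace
      ≤ ((T₂ : Matrix (Fin m) (Fin m) ℂ) * β (star a * a)).trace :=
        hT₂.trace_mul_le_trace_mul (hβS a)
    _ ≤ ((T₁ : Matrix (Fin n) (Fin n) ℂ) * (star (a : Matrix (Fin n) (Fin n) ℂ) * a)).trace :=
      hT (star a * a) (posSemidef_conjTranspose_mul_self _)

/-- The map `V : a T₁^{1/2} ↦ β(a) T₂^{1/2}` of Uhlmann's lemma is a contraction for the
Hilbert–Schmidt norm `‖M‖ = √tr(M* M)`: if `β` is a unital Schwarz map, `T₁` positive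
definite, `T₂` positive semidefinite and `tr(T₂ β(a)) ≤ tr(T₁ a)` for all positive `a`,
then `‖β(a) T₂^{1/2}‖ ≤ ‖a T₁^{1/2}‖` for all `a ∈ A₁`. -/
theorem uhlmann_contraction {n m : ℕ}
    (A₁ : StarSubalgebra ℂ (Matrix (Fin n) (Fin n) ℂ))
    (A₂ : StarSubalgebra ℂ (Matrix (Fin m) (Fin m) ℂ))
    (β : A₁ →ₗ[ℂ] A₂) (hβ1 : β 1 = 1)
    (hβS : ∀ x : A₁, ((↑(β (star x * x)) : Matrix (Fin m) (Fin m) ℂ) -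
      star (↑(β x) : Matrix (Fin m) (Fin m) ℂ) *
        (↑(β x) : Matrix (Fin m) (Fin m) ℂ)).PosSemidef)
    (T₁ : A₁) (T₂ : A₂)
    (hT₁ : (↑T₁ : Matrix (Fin n) (Fin n) ℂ).PosDef)
    (hT₂ : (↑T₂ : Matrix (Fin m) (Fin m) ℂ).PosSemidef)
    (hT : ∀ a : A₁, (↑a : Matrix (Fin n) (Fin n) ℂ).PosSemidef →
      ((↑T₂ : Matrix (Fin m) (Fin m) ℂ) * (↑(β a) : Matrix (Fin m) (Fin m) ℂ)).trace ≤
        ((↑T₁ : Matrix (Fin n) (Fin n) ℂ) * (↑a : Matrix (Fin n) (Fin n) ℂ)).trace) :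
    ∀ a : A₁,
      Real.sqrt ((star ((↑(β a) : Matrix (Fin m) (Fin m) ℂ) * hT₂.1.cfc Real.sqrt) *
        ((↑(β a) : Matrix (Fin m) (Fin m) ℂ) * hT₂.1.cfc Real.sqrt)).trace.re) ≤
      Real.sqrt ((star ((↑a : Matrix (Fin n) (Fin n) ℂ) * hT₁.posSemidef.1.cfc Real.sqrt) *
        ((↑a : Matrix (Fin n) (Fin n) ℂ) * hT₁.posSemidef.1.cfc Real.sqrt)).trace.re) :=
  uhlmann_contraction_general A₁ A₂ β hβS T₁ T₂ hT₁ hT₂ hT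
end
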